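/- Set θ = (δ/m)^{2/δ} and κ = m(m/δ + δ/m − 1) with m = 1. Then as δ → 0⁺, the generalized Gamma density f_∞(x;θ,κ,δ) converges pointwise for each x > 0 to the Log-normal density f_LN(x) = (1/(√(2π) x)) exp(−(log x + 1)²/2). -/

import Mathlib

open MeasureTheory Set

noncomputable def genGammaDensity (θ κ δ x : ℝ) : ℝ :=
  (δ / θ ^ κ) * (1 / Real.Gamma (κ / δ)) * x ^ (κ - 1) * Real.exp (-(x / θ) ^ δ)

noncomputable def logNormalDensity (x : ℝ) : ℝ :=
  (1 / (Real.sqrt (2 * Real.pi) * x)) * Real.exp (-(Real.log x + 1) ^ 2 / 2)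

/-!
Writing the density as `exp (log δ - κ log θ - log Γ(κ/δ) + (κ - 1) log x - (x/θ)^δ)`, the Gamma
argument `κ/δ = (1 - δ + δ²)/δ²` tends to infinity, and Stirling's formula for `log Γ(κ/δ)`
cancels every term that is singular in `δ`. What remains are the second-order Taylor quotients of
`log (1 - δ + δ²)` and of `exp (δ log x)` together with the Stirling remainder, whose limits
assemble to `-(log x + 1)²/2 - log (√(2π) x)`.

Stirling's formula for real arguments is deduced from the factorial version: log-convexity of `Γ`
(the Bohr–Mollerup bounds) controls `log Γ` between consecutive integers.
-/

open Filter Real Topology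
open scoped Nat

theorem mul_log_sub_log_le_sub {x y : ℝ} (hx : 0 < x) (hy : 0 < y) :
    x * (log y - log x) ≤ y - x := by
  have h := mul_le_mul_of_nonneg_left (log_le_sub_one_of_pos (div_pos hy hx)) hx.le
  rwa [log_div hy.ne' hx.ne', mul_sub_one, mul_div_cancel₀ _ hx.ne'] at h

theorem sub_le_mul_log_sub_log {x y : ℝ} (hx : 0 < x) (hy : 0 < y) :
    y - x ≤ y * (log y - log x) := by
  have h := mul_log_sub_log_le_sub hy hx
  linarith

noncomputable def stirlingRemainder (a : ℝ) : ℝ :=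
  log (Gamma a) - ((a - 1 / 2) * log a - a + log √(2 * π))

theorem stirlingRemainder_natCast {n : ℕ} (hn : n ≠ 0) :
    stirlingRemainder n = log (Stirling.stirlingSeq n) - log √π := by
  have hn0 : (0 : ℝ) < n := by positivity
  have hΓ : Gamma n = n ! / n := by
    rw [eq_div_iff hn0.ne', mul_comm, ← Gamma_add_one hn0.ne', Gamma_nat_eq_factorial]
  rw [stirlingRemainder, Stirling.stirlingSeq, hΓ, log_div (by positivity) hn0.ne',
    log_div (by positivity) (by positivity), log_mul (by positivity) (by positivity), log_pow,
    log_div hn0.ne' (exp_pos 1).ne', log_exp, log_sqrt (by positivity),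
    log_sqrt (by positivity), log_sqrt (by positivity), log_mul (by positivity) hn0.ne',
    log_mul (by positivity) (by positivity)]
  ring

theorem tendsto_stirlingRemainder_natCast :
    Tendsto (fun n : ℕ => stirlingRemainder n) atTop (𝓝 0) := by
  have h := ((continuousAt_log (by positivity)).tendsto.comp
    Stirling.tendsto_stirlingSeq_sqrt_pi).sub_const (log √π)
  rw [sub_self] at h
  exact h.congr' ((eventually_ne_atTop 0).mono fun n hn => (stirlingRemainder_natCast hn).symm)

theorem abs_stirlingRemainder_add_sub_le {n : ℕ} (hn : 2 ≤ n) {s : ℝ} (hs₀ : 0 ≤ s)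
    (hs₁ : s ≤ 1) : |stirlingRemainder (n + s) - stirlingRemainder n| ≤ 2 / (n - 1) := by
  have hn1 : (1 : ℝ) < n := by exact_mod_cast hn
  have hn0 : (0 : ℝ) < n := by linarith
  rcases hs₀.eq_or_lt with rfl | hs
  · simp only [add_zero, sub_self, abs_zero]
    exact div_nonneg zero_le_two (by linarith)
  have hfeq {y : ℝ} (hy : 0 < y) : (log ∘ Gamma) (y + 1) = (log ∘ Gamma) y + log y := by
    rw [Function.comp_apply, Gamma_add_one hy.ne', log_mul hy.ne' (Gamma_pos_of_pos hy).ne',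
      add_comm, Function.comp_apply]
  have hup := BohrMollerup.f_add_nat_le (n := n) convexOn_log_Gamma hfeq (by omega) hs hs₁
  have hlow := BohrMollerup.f_add_nat_ge convexOn_log_Gamma hfeq hn hs
  simp only [Function.comp_apply] at hup hlow
  set a : ℝ := n + s with ha
  set D := log a - log n
  set E := log n - log (n - 1)
  have ha0 : 0 < a := by linarith
  have hD₁ : a - n ≤ a * D := sub_le_mul_log_sub_log hn0 ha0
  have hD₂ : n * D ≤ a - n := mul_log_sub_log_le_sub hn0 ha0
  have hE : (n - 1) * E ≤ n - (n - 1) := mul_log_sub_log_le_sub (by linarith) hn0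
  have hD0 : 0 ≤ D := by nlinarith
  have hE0 : 0 ≤ E := sub_nonneg.2 (log_le_log (by linarith) (by linarith))
  have hdiff : stirlingRemainder a - stirlingRemainder n =
      log (Gamma a) - log (Gamma n) - (a - 1 / 2) * D - s * log n + s := by
    simp only [stirlingRemainder, D, ha]; ring
  have hbound : |stirlingRemainder a - stirlingRemainder n| ≤ D / 2 + E := by
    rw [hdiff, abs_le]
    constructor <;>
      nlinarith [mul_le_mul_of_nonneg_right hs₁ hD0, mul_le_mul_of_nonneg_right hs₁ hE0]
  rw [le_div_iff₀ (by linarith)]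
  refine (mul_le_mul_of_nonneg_right hbound (by linarith)).trans ?_
  nlinarith

theorem tendsto_stirlingRemainder_atTop : Tendsto stirlingRemainder atTop (𝓝 0) := by
  have hfloor : Tendsto (fun a : ℝ => stirlingRemainder ⌊a⌋₊) atTop (𝓝 0) :=
    tendsto_stirlingRemainder_natCast.comp tendsto_nat_floor_atTop
  have hbound : Tendsto (fun a : ℝ => 2 / ((⌊a⌋₊ : ℝ) - 1)) atTop (𝓝 0) :=
    tendsto_const_nhds.div_atTop <| tendsto_atTop_add_const_right _ (-1) <|
      tendsto_natCast_atTop_atTop.comp tendsto_nat_floor_atTop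
  have hdiff : Tendsto (fun a => stirlingRemainder a - stirlingRemainder ⌊a⌋₊) atTop (𝓝 0) := by
    refine squeeze_zero_norm' ?_ hbound
    filter_upwards [eventually_ge_atTop 2] with a ha
    have hfl : ⌊a⌋₊ + (a - ⌊a⌋₊) = a := by ring
    have := abs_stirlingRemainder_add_sub_le (Nat.le_floor (by exact_mod_cast ha))
      (sub_nonneg.2 (Nat.floor_le (by linarith))) (by linarith [Nat.lt_floor_add_one a])
    rwa [hfl] at this
  simpa using hdiff.add hfloor

theorem tendsto_sub_sub_div_sq {f f' : ℝ → ℝ} {c : ℝ} (hf : ∀ u, HasDerivAt f (f' u) u)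
    (hf' : HasDerivAt f' c 0) :
    Tendsto (fun u => (f u - f 0 - f' 0 * u) / u ^ 2) (𝓝[≠] 0) (𝓝 (c / 2)) := by
  set g : ℝ → ℝ := fun u => f u - f 0 - f' 0 * u - c / 2 * u ^ 2
  have hg : ∀ u ∈ univ, HasDerivWithinAt g (f' u - f' 0 - c * u) univ u := by
    intro u _
    have := (((hf u).sub_const (f 0)).sub ((hasDerivAt_id u).const_mul (f' 0))).sub
      ((hasDerivAt_pow 2 u).const_mul (c / 2))
    exact (this.congr_deriv (by simp; ring)).hasDerivWithinAt
  have ho : (fun u => f' u - f' 0 - c * u) =o[𝓝[univ] 0] fun u => (u - 0) ^ 1 := by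
    simpa [mul_comm] using hf'.isLittleO
  -- `g'` is `o(u)`, so the mean value inequality makes `g` itself `o(u²)`.
  have hgo := Convex.isLittleO_pow_succ_real convex_univ (mem_univ 0) hg ho
  simp only [nhdsWithin_univ, sub_zero] at hgo
  have := (hgo.tendsto_div_nhds_zero.mono_left (nhdsWithin_le_nhds (s := {0}ᶜ))).add_const (c / 2)
  rw [zero_add] at this
  refine this.congr' (eventually_nhdsWithin_of_forall fun u (hu : u ≠ 0) => ?_)
  simp only [g]
  field_simp
  ring

theorem tendsto_exp_mul_sub_div_sq (L : ℝ) :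
    Tendsto (fun u => (exp (u * L) - 1 - u * L) / u ^ 2) (𝓝[≠] 0) (𝓝 (L ^ 2 / 2)) := by
  have hf (u : ℝ) : HasDerivAt (fun u => exp (u * L)) (exp (u * L) * L) u :=
    ((hasDerivAt_id u).mul_const L).exp.congr_deriv (by simp)
  have hf' : HasDerivAt (fun u => exp (u * L) * L) (L ^ 2) 0 :=
    ((hf 0).mul_const L).congr_deriv (by simp; ring)
  simpa [mul_comm L] using tendsto_sub_sub_div_sq hf hf'

theorem tendsto_log_one_sub_add_sq_div_sq :
    Tendsto (fun u => (log (1 - u + u ^ 2) + u) / u ^ 2) (𝓝[≠] 0) (𝓝 (1 / 2)) := by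
  have hpos (u : ℝ) : 0 < 1 - u + u ^ 2 := by nlinarith [sq_nonneg (u - 1 / 2)]
  have hq (u : ℝ) : HasDerivAt (fun u => 1 - u + u ^ 2) (2 * u - 1) u :=
    (((hasDerivAt_id u).const_sub 1).add (hasDerivAt_pow 2 u)).congr_deriv (by simp; ring)
  have hf (u : ℝ) :
      HasDerivAt (fun u => log (1 - u + u ^ 2)) ((2 * u - 1) / (1 - u + u ^ 2)) u :=
    (hq u).log (hpos u).ne'
  have hf' : HasDerivAt (fun u : ℝ => (2 * u - 1) / (1 - u + u ^ 2)) 1 0 :=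
    ((((hasDerivAt_id (0 : ℝ)).const_mul (2 : ℝ)).sub_const (1 : ℝ)).div (hq 0)
      (hpos 0).ne').congr_deriv (by norm_num)
  simpa using tendsto_sub_sub_div_sq hf hf'

theorem genGammaDensity_eq_exp {θ κ δ x : ℝ} (hθ : 0 < θ) (hκ : 0 < κ) (hδ : 0 < δ)
    (hx : 0 < x) :
    genGammaDensity θ κ δ x =
      exp (log δ - κ * log θ - log (Gamma (κ / δ)) + (κ - 1) * log x - (x / θ) ^ δ) := by
  rw [exp_sub, exp_add, exp_sub, exp_sub, exp_log hδ, exp_log (Gamma_pos_of_pos (by positivity)),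
    mul_comm κ, mul_comm (κ - 1), ← rpow_def_of_pos hθ, ← rpow_def_of_pos hx, genGammaDensity,
    exp_neg]
  field_simp

theorem genGammaDensity_eq_exp_stirlingRemainder {δ x : ℝ} (hδ : 0 < δ) (hx : 0 < x) :
    genGammaDensity (δ ^ (2 / δ)) (1 / δ + δ - 1) δ x =
      exp (-(1 - δ + δ ^ 2 / 2) * ((log (1 - δ + δ ^ 2) + δ) / δ ^ 2) + δ / 2
        + (δ - 2) * log x - (exp (δ * log x) - 1 - δ * log x) / δ ^ 2 - log √(2 * π)
        - stirlingRemainder ((1 / δ + δ - 1) / δ)) := by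
  have hu : 0 < 1 - δ + δ ^ 2 := by nlinarith [sq_nonneg (δ - 1 / 2)]
  have hκ : (1 / δ + δ - 1) / δ = (1 - δ + δ ^ 2) / δ ^ 2 := by field_simp; ring
  have hκ0 : 0 < 1 / δ + δ - 1 := by
    have : 1 / δ + δ - 1 = (1 - δ + δ ^ 2) / δ := by field_simp; ring
    rw [this]; positivity
  have hlogΓ : log (Gamma ((1 / δ + δ - 1) / δ)) = ((1 / δ + δ - 1) / δ - 1 / 2) *
      (log (1 - δ + δ ^ 2) - 2 * log δ) - (1 / δ + δ - 1) / δ + log √(2 * π)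
      + stirlingRemainder ((1 / δ + δ - 1) / δ) := by
    rw [stirlingRemainder, hκ, log_div hu.ne' (by positivity), log_pow]
    push_cast; ring
  have hpow : (x / δ ^ (2 / δ)) ^ δ = exp (δ * log x) / δ ^ 2 := by
    rw [div_rpow hx.le (by positivity), ← rpow_mul hδ.le, div_mul_cancel₀ _ hδ.ne',
      rpow_def_of_pos hx, mul_comm, rpow_two]
  rw [genGammaDensity_eq_exp (by positivity) hκ0 hδ hx, hlogΓ, hpow, log_rpow hδ]
  congr 1
  field_simp
  ring

theorem tendsto_genGammaShape_atTop :
    Tendsto (fun δ : ℝ => (1 / δ + δ - 1) / δ) (𝓝[>] 0) atTop := by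
  refine tendsto_atTop_mono' _ ?_ tendsto_inv_nhdsGT_zero
  filter_upwards [self_mem_nhdsWithin] with δ (hδ : 0 < δ)
  have : (1 / δ + δ - 1) / δ = δ⁻¹ + (1 / δ - 1) ^ 2 := by field_simp; ring
  rw [this]
  exact le_add_of_nonneg_right (sq_nonneg _)

theorem logNormalDensity_eq_exp {x : ℝ} (hx : 0 < x) :
    logNormalDensity x = exp (-(1 / 2) - 2 * log x - log x ^ 2 / 2 - log √(2 * π)) := by
  have hlog : log (√(2 * π) * x) = log √(2 * π) + log x :=
    log_mul (by positivity) hx.ne'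
  rw [logNormalDensity, one_div, ← exp_log (by positivity : 0 < √(2 * π) * x), ← exp_neg,
    ← exp_add, hlog]
  ring_nf

theorem genGamma_tendsto_logNormal (x : ℝ) (hx : 0 < x) :
    Filter.Tendsto
      (fun δ : ℝ => genGammaDensity (δ ^ (2 / δ)) (1 / δ + δ - 1) δ x)
      (nhdsWithin 0 (Ioi 0)) (nhds (logNormalDensity x)) := by
  have hQ := tendsto_log_one_sub_add_sq_div_sq.mono_left (nhdsGT_le_nhdsNE 0)
  have hP := (tendsto_exp_mul_sub_div_sq (log x)).mono_left (nhdsGT_le_nhdsNE 0)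
  have hR := tendsto_stirlingRemainder_atTop.comp tendsto_genGammaShape_atTop
  have hcont {p : ℝ → ℝ} (hp : Continuous p) : Tendsto p (𝓝[>] 0) (𝓝 (p 0)) :=
    hp.continuousAt.tendsto.mono_left nhdsWithin_le_nhds
  rw [logNormalDensity_eq_exp hx]
  refine Tendsto.congr' (eventually_mem_nhdsWithin.mono fun δ hδ =>
    (genGammaDensity_eq_exp_stirlingRemainder hδ hx).symm) ((continuous_exp.tendsto _).comp ?_)
  have hlim := (((((hcont (p := fun δ => -(1 - δ + δ ^ 2 / 2)) (by fun_prop)).mul hQ).add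
    (hcont (p := fun δ => δ / 2 + (δ - 2) * log x) (by fun_prop))).sub hP).sub_const
    (log √(2 * π))).sub hR
  convert hlim using 1
  · ext δ
    simp only [Function.comp_apply]
    ring
  · norm_num
    ring
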